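/- Let (A, (·,·), R) be a locally finite root supersystem over a field F of characteristic zero. Then there exists a sub-supersystem S of R with S_ns = R_ns and ⟨S⟩ = ⟨R⟩ = A such that for every α ∈ S and every δ ∈ S_ns with (α, δ) ≠ 0 there is a unique r ∈ {1, −1} with α + rδ ∈ S. -/

import Mathlib

open Pointwise

/-- A symmetric biadditive form with values in `F`. -/
structure IsSymForm {F : Type*} [Field F] {A : Type*} [AddCommGroup A]
    (form : A → A → F) : Prop where
  symm : ∀ a b, form a b = form b a
  add_left : ∀ a b c, form (a + b) c = form a c + form b c

/-- The radical `A⁰` of a form. -/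
def formRadical {F : Type*} [Field F] {A : Type*} [AddCommGroup A]
    (form : A → A → F) : Set A := {a | ∀ b, form a b = 0}

/-- The set of real roots `R_re = {α ∈ R | (α,α) ≠ 0} ∪ {0}`. -/
def reRoots {F : Type*} [Field F] {A : Type*} [AddCommGroup A]
    (form : A → A → F) (R : Set A) : Set A :=
  {α | α ∈ R ∧ form α α ≠ 0} ∪ {0}

/-- The set of nonsingular roots `R_ns = {α ∈ R \ A⁰ | (α,α) = 0} ∪ {0}`. -/
def nsRoots {F : Type*} [Field F] {A : Type*} [AddCommGroup A]
    (form : A → A → F) (R : Set A) : Set A :=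
  {α | α ∈ R ∧ form α α = 0 ∧ α ∉ formRadical form} ∪ {0}

/-- Extended affine root supersystem. -/
structure IsEARS {F : Type*} [Field F] [CharZero F] {A : Type*} [AddCommGroup A]
    (form : A → A → F) (R : Set A) extends IsSymForm form : Prop where
  zero_mem : (0 : A) ∈ R
  closure_eq_top : AddSubgroup.closure R = ⊤
  neg_mem : ∀ α ∈ R, -α ∈ R
  cartan : ∀ α ∈ R, form α α ≠ 0 → ∀ β ∈ R, ∃ k : ℤ, 2 * form α β = (k : F) * form α α
  string : ∀ α ∈ R, form α α ≠ 0 → ∀ β ∈ R, ∃ p q : ℕ,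
      2 * form β α = ((p : F) - (q : F)) * form α α ∧
      (∀ k : ℤ, β + k • α ∈ R ↔ -(p : ℤ) ≤ k ∧ k ≤ (q : ℤ))
  ns_string : ∀ α ∈ R, form α α = 0 → ∀ β ∈ R, form α β ≠ 0 →
      (β - α ∈ R ∨ β + α ∈ R)

/-- Locally finite root supersystem: an EARS with nondegenerate form. -/
def IsLFRSS {F : Type*} [Field F] [CharZero F] {A : Type*} [AddCommGroup A]
    (form : A → A → F) (R : Set A) : Prop :=
  IsEARS form R ∧ ∀ a : A, (∀ b, form a b = 0) → a = 0

/-- `α` and `β` are connected in `X` by a finite chain with consecutive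
elements non-orthogonal. -/
def ConnectedIn {F : Type*} [Field F] {A : Type*} [AddCommGroup A]
    (form : A → A → F) (X : Set A) (α β : A) : Prop :=
  ∃ (n : ℕ) (c : Fin (n + 1) → A), (∀ i, c i ∈ X) ∧ c 0 = α ∧ c (Fin.last n) = β ∧
    ∀ i : Fin n, form (c i.castSucc) (c i.succ) ≠ 0

/-- A connected subset. -/
def IsConnectedSet {F : Type*} [Field F] {A : Type*} [AddCommGroup A]
    (form : A → A → F) (X : Set A) : Prop :=
  ∀ α ∈ X, ∀ β ∈ X, ConnectedIn form X α β

/-- Irreducibility: `R_re ≠ {0}` and `R \ R⁰` is connected. -/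
def IsIrreducibleRSS {F : Type*} [Field F] {A : Type*} [AddCommGroup A]
    (form : A → A → F) (R : Set A) : Prop :=
  reRoots form R ≠ {0} ∧ IsConnectedSet form (R \ formRadical form)

/-- Sub-supersystem of a locally finite root supersystem. -/
def IsSubSupersystem {F : Type*} [Field F] {A : Type*} [AddCommGroup A]
    (form : A → A → F) (R S : Set A) : Prop :=
  S ⊆ R ∧
  (∀ a ∈ AddSubgroup.closure S, (∀ b ∈ AddSubgroup.closure S, form a b = 0) → a = 0) ∧
  (0 : A) ∈ S ∧
  (∀ α ∈ S, form α α ≠ 0 → ∀ β ∈ S, ∀ k : ℤ,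
      2 * form β α = (k : F) * form α α → β - k • α ∈ S) ∧
  (∀ γ ∈ S, form γ γ = 0 → ∀ β ∈ S, form β γ ≠ 0 → (γ - β ∈ S ∨ γ + β ∈ S))

/-- `Π` is an integral base of `R` (a `ℤ`-basis of the group generated by `R`). -/
def IsIntegralBase {F : Type*} [Field F] {A : Type*} [AddCommGroup A]
    (form : A → A → F) (R P : Set A) : Prop :=
  P ⊆ R ∧ LinearIndependent ℤ (fun p : P => (p : A)) ∧
    Submodule.span ℤ P = Submodule.span ℤ R

/-- `Π` is a base of `R`. -/
def IsBase {F : Type*} [Field F] {A : Type*} [AddCommGroup A]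
    (form : A → A → F) (R P : Set A) : Prop :=
  IsIntegralBase form R P ∧
  ∀ α ∈ R \ formRadical form, ∃ (n : ℕ) (a : Fin n → A) (r : Fin n → ℤ),
    (∀ i, a i ∈ P) ∧ (∀ i, r i = 1 ∨ r i = -1) ∧
    α = ∑ i, r i • a i ∧
    ∀ t : Fin n, (∑ i ∈ Finset.Iic t, r i • a i) ∈ R \ formRadical form

/-!
Remove from `R` the isotropic pair sums `z = δ + δ'` (`δ, δ'` non-orthogonal isotropic roots with
`δ - δ'` also a root) whose norm `(z, z)` lies in a set `V ⊆ F` containing exactly one of `a, -a`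
for each `a ≠ 0`. What is left contains every isotropic root, so it generates the same group, and
it is stable under reflections, which preserve norms and the set of pair sums. Against a real root
`α`, an isotropic `δ` with `(α, δ) ≠ 0` has exactly one of `α ± δ` in `R`, and that one is not a
pair sum. For isotropic `α, δ`, if both `α ± δ` are roots they are pair sums of opposite norms
`±2 (α, δ)` and `V` keeps exactly one of them; if only one is a root, it is not a pair sum.

Two rigidity facts about a pair sum `z` carry this: no isotropic root has Cartan integer `2`
against `z`, and if an isotropic `α` has Cartan integer `1` against `z` then `2α - z` is a root.
Both come from a case analysis on the Cartan integer of the isotropic root against the real root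
`δ - δ'`, using that isotropic roots have Cartan integers in `[-2, 2]` against real roots and, for
the second, that nondegeneracy forbids `π` and `3π` from both being nonzero isotropic roots.
-/

namespace IsSymForm

variable {F : Type*} [Field F] {A : Type*} [AddCommGroup A] {form : A → A → F}

def leftHom (hs : IsSymForm form) (b : A) : A →+ F :=
  AddMonoidHom.mk' (fun a => form a b) fun a a' => hs.add_left a a' b

theorem sub_left (hs : IsSymForm form) (a b c : A) :
    form (a - b) c = form a c - form b c :=
  map_sub (hs.leftHom c) a b

theorem neg_left (hs : IsSymForm form) (a b : A) : form (-a) b = -form a b :=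
  map_neg (hs.leftHom b) a

theorem zero_left (hs : IsSymForm form) (a : A) : form 0 a = 0 :=
  map_zero (hs.leftHom a)

theorem zsmul_left (hs : IsSymForm form) (k : ℤ) (a b : A) :
    form (k • a) b = k * form a b := by
  rw [← zsmul_eq_mul]
  exact map_zsmul (hs.leftHom b) k a

theorem add_right (hs : IsSymForm form) (a b c : A) :
    form a (b + c) = form a b + form a c := by
  rw [hs.symm, hs.add_left, hs.symm b, hs.symm c]

theorem sub_right (hs : IsSymForm form) (a b c : A) :
    form a (b - c) = form a b - form a c := by
  rw [hs.symm, hs.sub_left, hs.symm b, hs.symm c]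

theorem neg_right (hs : IsSymForm form) (a b : A) : form a (-b) = -form a b := by
  rw [hs.symm, hs.neg_left, hs.symm]

theorem zero_right (hs : IsSymForm form) (a : A) : form a 0 = 0 := by
  rw [hs.symm, hs.zero_left]

theorem zsmul_right (hs : IsSymForm form) (k : ℤ) (a b : A) :
    form a (k • b) = k * form a b := by
  rw [hs.symm, hs.zsmul_left, hs.symm]

theorem form_neg_neg (hs : IsSymForm form) (a : A) : form (-a) (-a) = form a a := by
  rw [hs.neg_left, hs.neg_right, neg_neg]

end IsSymForm

theorem int_eq_of_cast_mul_eq {F : Type*} [Field F] [CharZero F] {c : F} (hc : c ≠ 0)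
    {m n : ℤ} (h : (m : F) * c = n * c) : m = n := by
  exact_mod_cast mul_right_cancel₀ hc h

theorem IsSymForm.form_sub_zsmul_sub_zsmul {F : Type*} [Field F] [CharZero F] {A : Type*}
    [AddCommGroup A] {form : A → A → F} (hs : IsSymForm form) {σ β β' : A} {k k' : ℤ}
    (hk : 2 * form β σ = k * form σ σ) (hk' : 2 * form β' σ = k' * form σ σ) :
    form (β - k • σ) (β' - k' • σ) = form β β' := by
  simp only [hs.sub_left, hs.sub_right, hs.zsmul_left, hs.zsmul_right, hs.symm σ β']
  linear_combination (-(k' : F) / 2) * hk + (-(k : F) / 2) * hk'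

namespace IsEARS

variable {F : Type*} [Field F] [CharZero F] {A : Type*} [AddCommGroup A]
  {form : A → A → F} {R : Set A}

theorem sub_zsmul_mem (hE : IsEARS form R) {x β : A} (hx : x ∈ R) (hxx : form x x ≠ 0)
    (hβ : β ∈ R) {n : ℤ} (hn : 2 * form β x = n * form x x) {j : ℤ}
    (hj : 0 ≤ j ∧ j ≤ n ∨ n ≤ j ∧ j ≤ 0) : β - j • x ∈ R := by
  obtain ⟨p, q, hpq, hstring⟩ := hE.string x hx hxx β hβ
  have : (p : ℤ) - q = n := int_eq_of_cast_mul_eq hxx (by push_cast; rw [← hpq, hn])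
  simpa [neg_zsmul, ← sub_eq_add_neg] using (hstring (-j)).2 ⟨by omega, by omega⟩

theorem sub_mem_of_cartan_pos (hE : IsEARS form R) {x β : A} (hx : x ∈ R)
    (hxx : form x x ≠ 0) (hβ : β ∈ R) {n : ℤ} (hn : 2 * form β x = n * form x x)
    (h1 : 1 ≤ n) : β - x ∈ R := by
  simpa using hE.sub_zsmul_mem hx hxx hβ hn (j := 1) (by omega)

theorem add_mem_of_form_eq_zero (hE : IsEARS form R) {x β : A} (hx : x ∈ R)
    (hxx : form x x ≠ 0) (hβ : β ∈ R) (hβx : form β x = 0) (hsub : β - x ∈ R) :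
    β + x ∈ R := by
  obtain ⟨p, q, hpq, hstring⟩ := hE.string x hx hxx β hβ
  have : (p : ℤ) - q = 0 :=
    int_eq_of_cast_mul_eq hxx (by push_cast; rw [← hpq, hβx]; ring)
  have hlow := (hstring (-1)).1 (by simpa [← sub_eq_add_neg] using hsub)
  simpa using (hstring 1).2 ⟨by omega, by omega⟩

theorem cartan_eq_neg_one_or_neg_two_of_add_mem (hE : IsEARS form R) {x γ : A}
    (hxx : form x x ≠ 0) (hγ : γ ∈ R) (hγγ : form γ γ = 0) {n : ℤ}
    (hn : 2 * form γ x = n * form x x) (hn0 : n ≠ 0) (hadd : γ + x ∈ R) :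
    n = -1 ∨ n = -2 := by
  have hs := hE.toIsSymForm
  by_cases hn1 : n = -1
  · exact Or.inl hn1
  have hnorm : form (γ + x) (γ + x) = (n + 1 : ℤ) * form x x := by
    simp only [hs.add_left, hs.add_right, hγγ, hs.symm x γ]
    push_cast
    linear_combination hn
  have hnorm0 : form (γ + x) (γ + x) ≠ 0 := by
    rw [hnorm]
    exact mul_ne_zero (by exact_mod_cast (by omega : n + 1 ≠ 0)) hxx
  -- the Cartan integer `m` of `γ` against the real root `γ + x` satisfies `n = m (n + 1)`
  obtain ⟨m, hm⟩ := hE.cartan (γ + x) hadd hnorm0 γ hγ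
  rw [hnorm, hs.add_left, hγγ, hs.symm x γ] at hm
  have hmn : n = m * (n + 1) :=
    int_eq_of_cast_mul_eq hxx (by push_cast at hm ⊢; linear_combination hm - hn)
  have := Int.eq_one_or_neg_one_of_mul_eq_one (u := n + 1) (v := 1 - m) (by linear_combination hmn)
  omega

theorem cartan_eq_one_or_two_of_sub_mem (hE : IsEARS form R) {x γ : A}
    (hxx : form x x ≠ 0) (hγ : γ ∈ R) (hγγ : form γ γ = 0) {n : ℤ}
    (hn : 2 * form γ x = n * form x x) (hn0 : n ≠ 0) (hsub : γ - x ∈ R) :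
    n = 1 ∨ n = 2 := by
  have hs := hE.toIsSymForm
  have hn' : 2 * form γ (-x) = (-n : ℤ) * form (-x) (-x) := by
    rw [hs.neg_right, hs.form_neg_neg]; push_cast; linear_combination -hn
  have := hE.cartan_eq_neg_one_or_neg_two_of_add_mem (by rwa [hs.form_neg_neg]) hγ hγγ hn'
    (neg_ne_zero.2 hn0) (by rwa [← sub_eq_add_neg])
  omega

theorem cartan_bounds_of_isotropic (hE : IsEARS form R) {x γ : A} (hx : x ∈ R)
    (hxx : form x x ≠ 0) (hγ : γ ∈ R) (hγγ : form γ γ = 0) {n : ℤ}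
    (hn : 2 * form γ x = n * form x x) : -2 ≤ n ∧ n ≤ 2 := by
  have hs := hE.toIsSymForm
  rcases eq_or_ne n 0 with rfl | hn0
  · omega
  have hγx : form γ x ≠ 0 := fun h => hn0 <| int_eq_of_cast_mul_eq hxx (by simpa [h] using hn.symm)
  rcases hE.ns_string γ hγ hγγ x hx hγx with hsub | hadd
  · have := hE.cartan_eq_one_or_two_of_sub_mem hxx hγ hγγ hn hn0
      (by simpa using hE.neg_mem _ hsub)
    omega
  · have := hE.cartan_eq_neg_one_or_neg_two_of_add_mem hxx hγ hγγ hn hn0 (by rwa [add_comm])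
    omega

theorem add_mem_iff_sub_not_mem_of_isotropic (hE : IsEARS form R) {x γ : A} (hx : x ∈ R)
    (hxx : form x x ≠ 0) (hγ : γ ∈ R) (hγγ : form γ γ = 0) (hxγ : form x γ ≠ 0) :
    x + γ ∈ R ↔ x - γ ∉ R := by
  have hs := hE.toIsSymForm
  obtain ⟨n, hn⟩ := hE.cartan x hx hxx γ hγ
  rw [hs.symm] at hn
  have hn0 : n ≠ 0 := by rintro rfl; simp [hs.symm, hxγ] at hn
  refine ⟨fun hadd hsub => ?_, fun hsub => ?_⟩
  · have h₁ := hE.cartan_eq_neg_one_or_neg_two_of_add_mem hxx hγ hγγ hn hn0 (by rwa [add_comm])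
    have h₂ := hE.cartan_eq_one_or_two_of_sub_mem hxx hγ hγγ hn hn0
      (by simpa using hE.neg_mem _ hsub)
    omega
  · rcases hE.ns_string γ hγ hγγ x hx (by rwa [hs.symm]) with h | h
    · exact absurd h hsub
    · exact h

theorem exists_mem_form_ne_zero (hE : IsEARS form R) {a b : A} (hab : form a b ≠ 0) :
    ∃ μ ∈ R, form a μ ≠ 0 := by
  have hs := hE.toIsSymForm
  by_contra! hR
  have hle : AddSubgroup.closure R ≤ (hs.leftHom a).ker :=
    (AddSubgroup.closure_le _).2 fun μ hμ => by simp [IsSymForm.leftHom, hs.symm μ, hR μ hμ]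
  rw [hE.closure_eq_top] at hle
  exact hab (by simpa [IsSymForm.leftHom, hs.symm b] using hle (AddSubgroup.mem_top b))

theorem exists_real_mem_form_ne_zero (hE : IsEARS form R) {π b : A} (hπ : π ∈ R)
    (hππ : form π π = 0) (hπb : form π b ≠ 0) :
    ∃ y ∈ R, form y y ≠ 0 ∧ form π y ≠ 0 := by
  have hs := hE.toIsSymForm
  obtain ⟨μ, hμ, hπμ⟩ := hE.exists_mem_form_ne_zero hπb
  by_cases hμμ : form μ μ = 0
  · -- then `μ ∓ π` is real, of norm `∓ 2 (π, μ)`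
    have h2 : 2 * form π μ ≠ 0 := mul_ne_zero two_ne_zero hπμ
    rcases hE.ns_string π hπ hππ μ hμ hπμ with h | h
    · refine ⟨μ - π, h, ?_, ?_⟩
      · simp only [hs.sub_left, hs.sub_right, hμμ, hππ, hs.symm μ π]
        contrapose! h2
        linear_combination -h2
      · rwa [hs.sub_right, hππ, sub_zero]
    · refine ⟨μ + π, h, ?_, ?_⟩
      · simp only [hs.add_left, hs.add_right, hμμ, hππ, hs.symm μ π]
        contrapose! h2
        linear_combination h2
      · rwa [hs.add_right, hππ, add_zero]
  · exact ⟨μ, hμ, hμμ, hπμ⟩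

end IsEARS

theorem IsLFRSS.eq_zero_of_isotropic_of_three_mem {F : Type*} [Field F] [CharZero F]
    {A : Type*} [AddCommGroup A] {form : A → A → F} {R : Set A} (hL : IsLFRSS form R)
    {π : A} (hπ : π ∈ R) (hππ : form π π = 0) (h3 : π + π + π ∈ R) : π = 0 := by
  obtain ⟨hE, hnd⟩ := hL
  have hs := hE.toIsSymForm
  by_contra hπ0
  obtain ⟨b, hπb⟩ : ∃ b, form π b ≠ 0 := by
    by_contra! h
    exact hπ0 (hnd π h)
  -- against a real root `y` with `(π, y) ≠ 0`, the Cartan integers of `π` and `3π` are `n ≠ 0`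
  -- and `3n`, both in `[-2, 2]`
  obtain ⟨y, hy, hyy, hπy⟩ := hE.exists_real_mem_form_ne_zero hπ hππ hπb
  obtain ⟨n, hn⟩ := hE.cartan y hy hyy π hπ
  rw [hs.symm] at hn
  have hn0 : n ≠ 0 := by rintro rfl; simp [hπy] at hn
  have h3n : 2 * form (π + π + π) y = (3 * n : ℤ) * form y y := by
    simp only [hs.add_left]; push_cast; linear_combination 3 * hn
  have h33 : form (π + π + π) (π + π + π) = 0 := by
    simp [hs.add_left, hs.add_right, hππ]
  have := hE.cartan_bounds_of_isotropic hy hyy h3 h33 h3n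
  omega

section IsotropicPair

variable {F : Type*} [Field F] {A : Type*} [AddCommGroup A]

structure IsIsotropicPair (form : A → A → F) (R : Set A) (δ δ' : A) : Prop where
  left_mem : δ ∈ R
  left_isotropic : form δ δ = 0
  right_mem : δ' ∈ R
  right_isotropic : form δ' δ' = 0
  form_ne_zero : form δ δ' ≠ 0
  add_mem : δ + δ' ∈ R
  sub_mem : δ - δ' ∈ R

def IsIsotropicPairSum (form : A → A → F) (R : Set A) (z : A) : Prop :=
  ∃ δ δ', IsIsotropicPair form R δ δ' ∧ δ + δ' = z

end IsotropicPair

namespace IsIsotropicPair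

variable {F : Type*} [Field F] {A : Type*} [AddCommGroup A] {form : A → A → F} {R : Set A}
  {δ δ' : A}

theorem form_add_self (hs : IsSymForm form) (hp : IsIsotropicPair form R δ δ') :
    form (δ + δ') (δ + δ') = 2 * form δ δ' := by
  simp only [hs.add_left, hs.add_right, hp.left_isotropic, hp.right_isotropic, hs.symm δ' δ]
  ring

theorem form_sub_self (hs : IsSymForm form) (hp : IsIsotropicPair form R δ δ') :
    form (δ - δ') (δ - δ') = -(2 * form δ δ') := by
  simp only [hs.sub_left, hs.sub_right, hp.left_isotropic, hp.right_isotropic, hs.symm δ' δ]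
  ring

variable [CharZero F]

theorem form_add_self_ne_zero (hs : IsSymForm form) (hp : IsIsotropicPair form R δ δ') :
    form (δ + δ') (δ + δ') ≠ 0 := by
  simp [hp.form_add_self hs, hp.form_ne_zero]

theorem form_sub_self_ne_zero (hs : IsSymForm form) (hp : IsIsotropicPair form R δ δ') :
    form (δ - δ') (δ - δ') ≠ 0 := by
  simp [hp.form_sub_self hs, hp.form_ne_zero]

protected theorem symm (hE : IsEARS form R) (hp : IsIsotropicPair form R δ δ') :
    IsIsotropicPair form R δ' δ where
  left_mem := hp.right_mem
  left_isotropic := hp.right_isotropic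
  right_mem := hp.left_mem
  right_isotropic := hp.left_isotropic
  form_ne_zero := by rw [hE.symm]; exact hp.form_ne_zero
  add_mem := by rw [add_comm]; exact hp.add_mem
  sub_mem := by simpa using hE.neg_mem _ hp.sub_mem

protected theorem neg (hE : IsEARS form R) (hp : IsIsotropicPair form R δ δ') :
    IsIsotropicPair form R (-δ) (-δ') where
  left_mem := hE.neg_mem _ hp.left_mem
  left_isotropic := by rw [hE.form_neg_neg]; exact hp.left_isotropic
  right_mem := hE.neg_mem _ hp.right_mem
  right_isotropic := by rw [hE.form_neg_neg]; exact hp.right_isotropic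
  form_ne_zero := by rw [hE.neg_left, hE.neg_right, neg_neg]; exact hp.form_ne_zero
  add_mem := by rw [← neg_add]; exact hE.neg_mem _ hp.add_mem
  sub_mem := by rw [← neg_sub', neg_sub]; simpa using hE.neg_mem _ hp.sub_mem

theorem sub_zsmul (hE : IsEARS form R) (hp : IsIsotropicPair form R δ δ') {σ : A}
    (hσ : σ ∈ R) (hσσ : form σ σ ≠ 0) {k k' : ℤ}
    (hk : 2 * form δ σ = k * form σ σ) (hk' : 2 * form δ' σ = k' * form σ σ) :
    IsIsotropicPair form R (δ - k • σ) (δ' - k' • σ) := by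
  have hs := hE.toIsSymForm
  have hadd : 2 * form (δ + δ') σ = (k + k' : ℤ) * form σ σ := by
    rw [hs.add_left]; push_cast; linear_combination hk + hk'
  have hsub : 2 * form (δ - δ') σ = (k - k' : ℤ) * form σ σ := by
    rw [hs.sub_left]; push_cast; linear_combination hk - hk'
  refine ⟨hE.sub_zsmul_mem hσ hσσ hp.left_mem hk (by omega), ?_,
    hE.sub_zsmul_mem hσ hσσ hp.right_mem hk' (by omega), ?_, ?_, ?_, ?_⟩
  · rw [hs.form_sub_zsmul_sub_zsmul hk hk]; exact hp.left_isotropic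
  · rw [hs.form_sub_zsmul_sub_zsmul hk' hk']; exact hp.right_isotropic
  · rw [hs.form_sub_zsmul_sub_zsmul hk hk']; exact hp.form_ne_zero
  · convert hE.sub_zsmul_mem hσ hσσ hp.add_mem hadd (j := k + k') (by omega) using 1
    rw [add_zsmul]; abel
  · convert hE.sub_zsmul_mem hσ hσσ hp.sub_mem hsub (j := k - k') (by omega) using 1
    rw [_root_.sub_zsmul]; abel

theorem not_forms_eq_one_one (hE : IsEARS form R) (hp : IsIsotropicPair form R δ δ') {γ : A}
    (hγ : γ ∈ R) (hγγ : form γ γ = 0) (ha : form γ δ = form δ δ')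
    (hb : form γ δ' = form δ δ') : False := by
  have hs := hE.toIsSymForm
  have ht := hp.form_ne_zero
  have hd := hp.left_isotropic
  have hd' := hp.right_isotropic
  have hz := hp.form_add_self hs
  have hz0 := hp.form_add_self_ne_zero hs
  rcases hE.ns_string δ hp.left_mem hd γ hγ (by rwa [hs.symm, ha]) with hsub | hadd
  · -- `γ` has Cartan integer `3` against the real root `γ - δ - (δ + δ')`
    have hv : γ - δ - (δ + δ') ∈ R := hE.sub_mem_of_cartan_pos hp.add_mem hz0 hsub (n := 1)
      (by rw [hz]; simp only [hs.add_right, hs.sub_left, hd, ha, hb]; push_cast; ring) le_rfl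
    have hvv : form (γ - δ - (δ + δ')) (γ - δ - (δ + δ')) = -(2 * form δ δ') := by
      simp only [hs.add_left, hs.add_right, hs.sub_left, hs.sub_right, hd, hd', hγγ, ha, hb,
        hs.symm δ γ, hs.symm δ' γ, hs.symm δ' δ]
      ring
    have := hE.cartan_bounds_of_isotropic hv (by rw [hvv]; simp [ht]) hγ hγγ (n := 3)
      (by rw [hvv]; simp only [hs.add_right, hs.sub_right, hγγ, ha, hb]; push_cast; ring)
    omega
  · -- `γ` has Cartan integer `-5` against the real root `γ + δ - 3 • (δ + δ')`
    have hv : γ + δ - (3 : ℤ) • (δ + δ') ∈ R := hE.sub_zsmul_mem hp.add_mem hz0 hadd (n := 3)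
      (by rw [hz]; simp only [hs.add_left, hs.add_right, hd, ha, hb]; push_cast; ring) (by omega)
    have hvv : form (γ + δ - (3 : ℤ) • (δ + δ')) (γ + δ - (3 : ℤ) • (δ + δ')) =
        2 * form δ δ' := by
      simp only [hs.add_left, hs.add_right, hs.sub_left, hs.sub_right, hs.zsmul_left,
        hs.zsmul_right, hd, hd', hγγ, ha, hb, hs.symm δ γ, hs.symm δ' γ, hs.symm δ' δ]
      push_cast
      ring
    have := hE.cartan_bounds_of_isotropic hv (by rw [hvv]; simp [ht]) hγ hγγ (n := -5)
      (by
        rw [hvv]; simp only [hs.add_right, hs.sub_right, hs.zsmul_right, hγγ, ha, hb]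
        push_cast; ring)
    omega

theorem not_forms_eq_half_threeHalves (hE : IsEARS form R) (hp : IsIsotropicPair form R δ δ')
    {γ : A} (hγ : γ ∈ R) (hγγ : form γ γ = 0) (ha : form γ δ = form δ δ' / 2)
    (hb : form γ δ' = 3 * form δ δ' / 2) : False := by
  have hs := hE.toIsSymForm
  have ht := hp.form_ne_zero
  have hd := hp.left_isotropic
  have hd' := hp.right_isotropic
  have hz := hp.form_add_self hs
  have hz0 := hp.form_add_self_ne_zero hs
  rcases hE.ns_string δ hp.left_mem hd γ hγ (by simp [hs.symm δ γ, ha, ht]) with hsub | hadd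
  · -- `γ` has Cartan integer `5` against the real root `γ - δ - (δ + δ')`
    have hv : γ - δ - (δ + δ') ∈ R := hE.sub_mem_of_cartan_pos hp.add_mem hz0 hsub (n := 1)
      (by rw [hz]; simp only [hs.add_right, hs.sub_left, hd, ha, hb]; push_cast; ring) le_rfl
    have hvv : form (γ - δ - (δ + δ')) (γ - δ - (δ + δ')) = -form δ δ' := by
      simp only [hs.add_left, hs.add_right, hs.sub_left, hs.sub_right, hd, hd', hγγ, ha, hb,
        hs.symm δ γ, hs.symm δ' γ, hs.symm δ' δ]
      ring
    have := hE.cartan_bounds_of_isotropic hv (by rw [hvv]; simp [ht]) hγ hγγ (n := 5)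
      (by rw [hvv]; simp only [hs.add_right, hs.sub_right, hγγ, ha, hb]; push_cast; ring)
    omega
  · -- `δ'` has Cartan integer `5` against the real root `γ + δ`
    have huu : form (γ + δ) (γ + δ) = form δ δ' := by
      simp only [hs.add_left, hs.add_right, hd, hγγ, ha, hs.symm δ γ]; ring
    have := hE.cartan_bounds_of_isotropic hadd (by rw [huu]; exact ht) hp.right_mem hd' (n := 5)
      (by rw [huu]; simp only [hs.add_right, hb, hs.symm δ' γ, hs.symm δ' δ]; push_cast; ring)
    omega

theorem add_self_not_mem_of_add_self_mem (hE : IsEARS form R)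
    (hp : IsIsotropicPair form R δ δ') (h : δ' + δ' ∈ R) : δ + δ ∉ R := by
  intro h'
  have hs := hE.toIsSymForm
  have ht := hp.form_ne_zero
  have hd := hp.left_isotropic
  have hd' := hp.right_isotropic
  -- `δ` would have Cartan integer `1 / 2` against the real root `δ + δ ± (δ' + δ')`
  have key : ∀ s : ℤ, s = 1 ∨ s = -1 → δ + δ + s • (δ' + δ') ∉ R := by
    rintro s hsign hq
    have hss : (s : F) * s = 1 := by rcases hsign with rfl | rfl <;> norm_num
    have hqq : form (δ + δ + s • (δ' + δ')) (δ + δ + s • (δ' + δ')) = 8 * s * form δ δ' := by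
      simp only [hs.add_left, hs.add_right, hs.zsmul_left, hs.zsmul_right, hd, hd', hs.symm δ' δ]
      ring
    obtain ⟨m, hm⟩ := hE.cartan _ hq (by rw [hqq]; rcases hsign with rfl | rfl <;> simp [ht]) δ
      hp.left_mem
    rw [hqq] at hm
    simp only [hs.add_left, hs.zsmul_left, hd, hs.symm δ' δ] at hm
    have := int_eq_of_cast_mul_eq ht (m := 4) (n := 8 * m) (by
      push_cast; linear_combination (s : F) * hm + (8 * m * form δ δ' - 4 * form δ δ') * hss)
    omega
  rcases hE.ns_string _ h (by simp [hs.add_left, hs.add_right, hd']) _ h'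
    (by simp [hs.add_left, hs.add_right, hs.symm δ' δ, ht]) with hq | hq
  · exact key (-1) (Or.inr rfl) (by simpa [sub_eq_add_neg] using hq)
  · exact key 1 (Or.inl rfl) (by simpa using hq)

theorem not_forms_eq_zero_two (hE : IsEARS form R) (hp : IsIsotropicPair form R δ δ')
    {γ : A} (hγ : γ ∈ R) (hγγ : form γ γ = 0) (ha : form γ δ = 0)
    (hb : form γ δ' = 2 * form δ δ') : False := by
  have hs := hE.toIsSymForm
  have ht := hp.form_ne_zero
  have hd := hp.left_isotropic
  have hd' := hp.right_isotropic
  have hz := hp.form_add_self hs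
  have hz0 := hp.form_add_self_ne_zero hs
  rcases hE.ns_string δ' hp.right_mem hd' γ hγ (by simp [hs.symm δ' γ, hb, ht]) with hsub | hadd
  · -- going down root strings from `γ - δ'` reaches `δ + δ' + δ'`, then `δ' + δ'` and `δ + δ`
    have hρ : γ - δ' - (δ + δ') ∈ R := hE.sub_mem_of_cartan_pos hp.add_mem hz0 hsub (n := 1)
      (by
        rw [hz]; simp only [hs.add_right, hs.sub_left, hd', ha, hb, hs.symm δ' δ]
        push_cast; ring) le_rfl
    have hρρ : form (γ - δ' - (δ + δ')) (γ - δ' - (δ + δ')) = -(4 * form δ δ') := by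
      simp only [hs.add_left, hs.add_right, hs.sub_left, hs.sub_right, hd, hd', hγγ, ha, hb,
        hs.symm δ γ, hs.symm δ' γ, hs.symm δ' δ]
      ring
    have hq : δ + δ' + δ' ∈ R := by
      convert hE.sub_mem_of_cartan_pos hρ (by rw [hρρ]; simp [ht]) hγ (n := 2)
        (by rw [hρρ]; simp only [hs.add_right, hs.sub_right, hγγ, ha, hb]; push_cast; ring)
        (by norm_num) using 1
      abel
    have hqq : form (δ + δ' + δ') (δ + δ' + δ') = 4 * form δ δ' := by
      simp only [hs.add_left, hs.add_right, hd, hd', hs.symm δ' δ]; ring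
    have h2δ' : δ' + δ' ∈ R := by
      convert hE.neg_mem _ (hE.sub_mem_of_cartan_pos hq (by rw [hqq]; simp [ht]) hp.left_mem
        (n := 1) (by rw [hqq]; simp only [hs.add_right, hd]; push_cast; ring)
        le_rfl) using 1
      abel
    have h2δ : δ + δ ∈ R := by
      convert hE.neg_mem _ (hE.sub_zsmul_mem hp.add_mem hz0 h2δ' (n := 2)
        (by rw [hz]; simp only [hs.add_left, hs.add_right, hd', hs.symm δ' δ]; push_cast; ring)
        (j := 2) (by omega)) using 1
      abel
    exact hp.add_self_not_mem_of_add_self_mem hE h2δ' h2δ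
  · -- `δ + δ'` would have Cartan integer `3 / 2` against the real root `γ + δ'`
    have huu : form (γ + δ') (γ + δ') = 4 * form δ δ' := by
      simp only [hs.add_left, hs.add_right, hd', hγγ, hb, hs.symm δ' γ]; ring
    obtain ⟨m, hm⟩ := hE.cartan _ hadd (by rw [huu]; simp [ht]) _ hp.add_mem
    rw [huu] at hm
    simp only [hs.add_left, hs.add_right, hd', ha, hb, hs.symm δ' δ] at hm
    have := int_eq_of_cast_mul_eq ht (m := 4 * m) (n := 6) (by push_cast; linear_combination -hm)
    omega

/-- The Cartan integer of `γ` against the real root `δ - δ'` pins `((γ, δ), (γ, δ'))` down to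
`(t, t)`, `(t/2, 3t/2)` or `(0, 2t)` up to swapping `δ, δ'`, where `t = (δ, δ')`. -/
theorem form_add_ne_form_self (hE : IsEARS form R) (hp : IsIsotropicPair form R δ δ') {γ : A}
    (hγ : γ ∈ R) (hγγ : form γ γ = 0) : form γ (δ + δ') ≠ form (δ + δ') (δ + δ') := by
  intro hsum
  have hs := hE.toIsSymForm
  have hy := hs.symm δ' δ
  rw [hp.form_add_self hs, hs.add_right] at hsum
  obtain ⟨c, hc⟩ := hE.cartan _ hp.sub_mem (hp.form_sub_self_ne_zero hs) γ hγ
  rw [hs.symm] at hc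
  obtain ⟨hc₁, hc₂⟩ := hE.cartan_bounds_of_isotropic hp.sub_mem (hp.form_sub_self_ne_zero hs)
    hγ hγγ hc
  rw [hp.form_sub_self hs, hs.sub_right] at hc
  interval_cases c <;> push_cast at hc
  · exact (hp.symm hE).not_forms_eq_zero_two hE hγ hγγ
      (by linear_combination hsum / 2 - hc / 4) (by rw [hy]; linear_combination hsum / 2 + hc / 4)
  · exact (hp.symm hE).not_forms_eq_half_threeHalves hE hγ hγγ
      (by rw [hy]; linear_combination hsum / 2 - hc / 4)
      (by rw [hy]; linear_combination hsum / 2 + hc / 4)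
  · exact hp.not_forms_eq_one_one hE hγ hγγ
      (by linear_combination hsum / 2 + hc / 4) (by linear_combination hsum / 2 - hc / 4)
  · exact hp.not_forms_eq_half_threeHalves hE hγ hγγ
      (by linear_combination hsum / 2 + hc / 4) (by linear_combination hsum / 2 - hc / 4)
  · exact hp.not_forms_eq_zero_two hE hγ hγγ
      (by linear_combination hsum / 2 + hc / 4) (by linear_combination hsum / 2 - hc / 4)

theorem add_not_mem_of_forms_half_half (hE : IsEARS form R) (hp : IsIsotropicPair form R δ δ')
    {α : A} (hαα : form α α = 0) (ha : form α δ = form δ δ' / 2)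
    (hb : form α δ' = form δ δ' / 2) : α + δ' ∉ R := by
  intro hadd
  have hs := hE.toIsSymForm
  have ht := hp.form_ne_zero
  -- `δ` would have Cartan integer `3` against the real root `α + δ'`
  have huu : form (α + δ') (α + δ') = form δ δ' := by
    simp only [hs.add_left, hs.add_right, hαα, hp.right_isotropic, hb, hs.symm δ' α]; ring
  have := hE.cartan_bounds_of_isotropic hadd (by rw [huu]; exact ht) hp.left_mem
    hp.left_isotropic (n := 3)
    (by rw [huu]; simp only [hs.add_right, hs.symm δ α, ha]; push_cast; ring)
  omega

theorem add_self_sub_mem_of_forms_half_half (hE : IsEARS form R)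
    (hp : IsIsotropicPair form R δ δ') {α : A} (hα : α ∈ R) (hαα : form α α = 0)
    (ha : form α δ = form δ δ' / 2) (hb : form α δ' = form δ δ' / 2) :
    α + α - (δ + δ') ∈ R := by
  have hs := hE.toIsSymForm
  have ht := hp.form_ne_zero
  have hy := hs.symm δ' δ
  have hsub : α - δ ∈ R := by
    refine (hE.ns_string δ hp.left_mem hp.left_isotropic α hα
      (by simp [hs.symm δ α, ha, ht])).resolve_right fun hadd => ?_
    exact (hp.symm hE).add_not_mem_of_forms_half_half hE hαα (by rw [hy]; exact hb)
      (by rw [hy]; exact ha) hadd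
  have hsub' : α - δ' ∈ R :=
    (hE.ns_string δ' hp.right_mem hp.right_isotropic α hα
      (by simp [hs.symm δ' α, hb, ht])).resolve_right
      (hp.add_not_mem_of_forms_half_half hE hαα ha hb)
  -- `α - δ` and the real root `α - δ'` are orthogonal, and their difference is a root
  have hvv : form (α - δ') (α - δ') = -form δ δ' := by
    simp only [hs.sub_left, hs.sub_right, hαα, hp.right_isotropic, hb, hs.symm δ' α]; ring
  convert hE.add_mem_of_form_eq_zero hsub' (by rw [hvv]; simpa using ht) hsub
    (by simp only [hs.sub_left, hs.sub_right, hαα, ha, hb, hs.symm δ α]; ring)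
    (by convert hE.neg_mem _ hp.sub_mem using 1; abel) using 1
  abel

theorem add_self_sub_mem_of_forms_zero_one (hL : IsLFRSS form R)
    (hp : IsIsotropicPair form R δ δ') {α : A} (hα : α ∈ R) (hαα : form α α = 0)
    (ha : form α δ = 0) (hb : form α δ' = form δ δ') : α + α - (δ + δ') ∈ R := by
  have hE := hL.1
  have hs := hE.toIsSymForm
  have ht := hp.form_ne_zero
  have hd := hp.left_isotropic
  have hd' := hp.right_isotropic
  have hz := hp.form_add_self hs
  have hz0 := hp.form_add_self_ne_zero hs
  rcases hE.ns_string δ' hp.right_mem hd' α hα (by simp [hs.symm δ' α, hb, ht]) with hsub | hadd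
  · -- `α - δ' - (δ - δ')` and the real root `α - δ'` are orthogonal, and differ by a root
    have hπ : α - δ' - (δ - δ') ∈ R := hE.sub_mem_of_cartan_pos hp.sub_mem
      (hp.form_sub_self_ne_zero hs) hsub (n := 2)
      (by
        rw [hp.form_sub_self hs]; simp only [hs.sub_left, hs.sub_right, hd', ha, hb, hs.symm δ' δ]
        push_cast; ring) (by norm_num)
    have hvv : form (α - δ') (α - δ') = -(2 * form δ δ') := by
      simp only [hs.sub_left, hs.sub_right, hαα, hd', hb, hs.symm δ' α]; ring
    convert hE.add_mem_of_form_eq_zero hsub (by rw [hvv]; simp [ht]) hπ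
      (by simp only [hs.sub_left, hs.sub_right, hd', hαα, ha, hb, hs.symm δ α, hs.symm δ' α]; ring)
      (by convert hE.neg_mem _ hp.sub_mem using 1; abel) using 1
    abel
  · -- root strings through `u = α + δ'` give `3 (α - δ) = 3 u - 3 (δ + δ') ∈ R`, forcing `α = δ`
    have huu : form (α + δ') (α + δ') = 2 * form δ δ' := by
      simp only [hs.add_left, hs.add_right, hαα, hd', hb, hs.symm δ' α]; ring
    have huz : 2 * form (α + δ') (δ + δ') = (2 : ℤ) * form (δ + δ') (δ + δ') := by
      rw [hz]; simp only [hs.add_left, hs.add_right, hd', ha, hb, hs.symm δ' δ]; push_cast; ring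
    have hπ : α + δ' - (δ + δ') ∈ R := hE.sub_mem_of_cartan_pos hp.add_mem hz0 hadd huz (by omega)
    have hσ : α + δ' - (2 : ℤ) • (δ + δ') ∈ R := hE.sub_zsmul_mem hp.add_mem hz0 hadd huz (by omega)
    have hτ := hE.sub_zsmul_mem hadd (by rw [huu]; simp [ht]) hσ (n := -2) (j := -2)
      (by
        rw [huu]
        simp only [hs.add_left, hs.add_right, hs.sub_left, hs.zsmul_left, hd', hαα, ha, hb,
          hs.symm δ α, hs.symm δ' α]
        push_cast; ring) (by omega)
    have h3π := hE.sub_zsmul_mem hp.add_mem hz0 hτ (n := 2) (j := 1)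
      (by
        rw [hz]
        simp only [hs.add_left, hs.add_right, hs.sub_left, hs.zsmul_left, hd, hd', ha, hb,
          hs.symm δ' δ]
        push_cast; ring) (by omega)
    have hαδ : α - δ = 0 := hL.eq_zero_of_isotropic_of_three_mem (by convert hπ using 1; abel)
      (by simp only [hs.sub_left, hs.sub_right, hαα, hd, ha, hs.symm δ α]; ring)
      (by convert h3π using 1; abel)
    rw [sub_eq_zero.mp hαδ]
    convert hp.sub_mem using 1
    abel

theorem add_self_sub_mem_of_forms_negHalf_threeHalves (hE : IsEARS form R)
    (hp : IsIsotropicPair form R δ δ') {α : A} (hα : α ∈ R) (hαα : form α α = 0)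
    (ha : form α δ = -(form δ δ' / 2)) (hb : form α δ' = 3 * form δ δ' / 2) :
    α + α - (δ + δ') ∈ R := by
  have hs := hE.toIsSymForm
  have ht := hp.form_ne_zero
  have hd' := hp.right_isotropic
  rcases hE.ns_string δ' hp.right_mem hd' α hα (by simp [hs.symm δ' α, hb, ht]) with hsub | hadd
  · -- `δ - δ'` has Cartan integer `2` against the real root `α - δ'`
    have hyy : form (α - δ') (α - δ') = -(3 * form δ δ') := by
      simp only [hs.sub_left, hs.sub_right, hαα, hd', hb, hs.symm δ' α]; ring
    convert hE.neg_mem _ (hE.sub_zsmul_mem hsub (by rw [hyy]; simp [ht]) hp.sub_mem (n := 2)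
      (j := 2) (by
        rw [hyy]; simp only [hs.sub_left, hs.sub_right, hd', ha, hb, hs.symm δ α, hs.symm δ' α]
        push_cast; ring) (by omega)) using 1
    abel
  · -- `δ` would have Cartan integer `1 / 3` against the real root `α + δ'`
    exfalso
    have hyy : form (α + δ') (α + δ') = 3 * form δ δ' := by
      simp only [hs.add_left, hs.add_right, hαα, hd', hb, hs.symm δ' α]; ring
    obtain ⟨m, hm⟩ := hE.cartan _ hadd (by rw [hyy]; simp [ht]) δ hp.left_mem
    rw [hyy] at hm
    simp only [hs.add_left, ha, hs.symm δ' δ] at hm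
    have := int_eq_of_cast_mul_eq ht (m := 1) (n := 3 * m) (by push_cast; linear_combination hm)
    omega

/-- The Cartan integer of `α` against the real root `δ - δ'` pins `((α, δ), (α, δ'))` down to
`(t/2, t/2)`, `(0, t)` or `(-t/2, 3t/2)` up to swapping `δ, δ'`, where `t = (δ, δ')`. -/
theorem add_self_sub_mem (hL : IsLFRSS form R) (hp : IsIsotropicPair form R δ δ') {α : A}
    (hα : α ∈ R) (hαα : form α α = 0)
    (hhalf : 2 * form α (δ + δ') = form (δ + δ') (δ + δ')) : α + α - (δ + δ') ∈ R := by
  have hE := hL.1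
  have hs := hE.toIsSymForm
  have hy := hs.symm δ' δ
  rw [hp.form_add_self hs, hs.add_right] at hhalf
  obtain ⟨c, hc⟩ := hE.cartan _ hp.sub_mem (hp.form_sub_self_ne_zero hs) α hα
  rw [hs.symm] at hc
  obtain ⟨hc₁, hc₂⟩ := hE.cartan_bounds_of_isotropic hp.sub_mem (hp.form_sub_self_ne_zero hs)
    hα hαα hc
  rw [hp.form_sub_self hs, hs.sub_right] at hc
  have hswap : α + α - (δ' + δ) = α + α - (δ + δ') := by rw [add_comm δ']
  interval_cases c <;> push_cast at hc
  · rw [← hswap]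
    exact (hp.symm hE).add_self_sub_mem_of_forms_negHalf_threeHalves hE hα hαα
      (by rw [hy]; linear_combination hhalf / 4 - hc / 4)
      (by rw [hy]; linear_combination hhalf / 4 + hc / 4)
  · rw [← hswap]
    exact (hp.symm hE).add_self_sub_mem_of_forms_zero_one hL hα hαα
      (by linear_combination hhalf / 4 - hc / 4) (by rw [hy]; linear_combination hhalf / 4 + hc / 4)
  · exact hp.add_self_sub_mem_of_forms_half_half hE hα hαα
      (by linear_combination hhalf / 4 + hc / 4) (by linear_combination hhalf / 4 - hc / 4)
  · exact hp.add_self_sub_mem_of_forms_zero_one hL hα hαα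
      (by linear_combination hhalf / 4 + hc / 4) (by linear_combination hhalf / 4 - hc / 4)
  · exact hp.add_self_sub_mem_of_forms_negHalf_threeHalves hE hα hαα
      (by linear_combination hhalf / 4 + hc / 4) (by linear_combination hhalf / 4 - hc / 4)

end IsIsotropicPair

section

variable {F : Type*} [Field F] [CharZero F] {A : Type*} [AddCommGroup A]
  {form : A → A → F} {R : Set A}

namespace IsIsotropicPairSum

variable {z : A}

theorem form_self_ne_zero (hs : IsSymForm form) (h : IsIsotropicPairSum form R z) :
    form z z ≠ 0 := by
  obtain ⟨δ, δ', hp, rfl⟩ := h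
  exact hp.form_add_self_ne_zero hs

protected theorem neg (hE : IsEARS form R) (h : IsIsotropicPairSum form R z) :
    IsIsotropicPairSum form R (-z) := by
  obtain ⟨δ, δ', hp, rfl⟩ := h
  exact ⟨-δ, -δ', hp.neg hE, by abel⟩

theorem sub_zsmul (hE : IsEARS form R) (h : IsIsotropicPairSum form R z) {σ : A} (hσ : σ ∈ R)
    (hσσ : form σ σ ≠ 0) {k : ℤ} (hk : 2 * form z σ = k * form σ σ) :
    IsIsotropicPairSum form R (z - k • σ) := by
  have hs := hE.toIsSymForm
  obtain ⟨δ, δ', hp, rfl⟩ := h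
  obtain ⟨k₁, hk₁⟩ := hE.cartan σ hσ hσσ δ hp.left_mem
  obtain ⟨k₂, hk₂⟩ := hE.cartan σ hσ hσσ δ' hp.right_mem
  rw [hs.symm] at hk₁ hk₂
  have : k = k₁ + k₂ := int_eq_of_cast_mul_eq hσσ (by
    push_cast; rw [← hk, hs.add_left]; linear_combination hk₁ + hk₂)
  exact ⟨_, _, hp.sub_zsmul hE hσ hσσ hk₁ hk₂, by rw [this, add_zsmul]; abel⟩

theorem form_ne_form_self (hE : IsEARS form R) (h : IsIsotropicPairSum form R z) {γ : A}
    (hγ : γ ∈ R) (hγγ : form γ γ = 0) : form γ z ≠ form z z := by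
  obtain ⟨δ, δ', hp, rfl⟩ := h
  exact hp.form_add_ne_form_self hE hγ hγγ

theorem add_self_sub_mem (hL : IsLFRSS form R) (h : IsIsotropicPairSum form R z) {α : A}
    (hα : α ∈ R) (hαα : form α α = 0) (hhalf : 2 * form α z = form z z) : α + α - z ∈ R := by
  obtain ⟨δ, δ', hp, rfl⟩ := h
  exact hp.add_self_sub_mem hL hα hαα hhalf

end IsIsotropicPairSum

theorem IsEARS.not_isIsotropicPairSum_add (hE : IsEARS form R) {x γ : A} (hx : x ∈ R)
    (hxx : form x x ≠ 0) (hγ : γ ∈ R) (hγγ : form γ γ = 0) (hxγ : form x γ ≠ 0)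
    (hadd : x + γ ∈ R) : ¬IsIsotropicPairSum form R (x + γ) := by
  intro h
  have hs := hE.toIsSymForm
  obtain ⟨n, hn⟩ := hE.cartan x hx hxx γ hγ
  rw [hs.symm] at hn
  have hn0 : n ≠ 0 := by rintro rfl; simp [hs.symm, hxγ] at hn
  have hnorm : form (x + γ) (x + γ) = (n + 1 : ℤ) * form x x := by
    simp only [hs.add_left, hs.add_right, hγγ, hs.symm x γ]; push_cast; linear_combination hn
  rcases hE.cartan_eq_neg_one_or_neg_two_of_add_mem hxx hγ hγγ hn hn0 (by rwa [add_comm])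
    with rfl | rfl
  · exact h.form_self_ne_zero hs (by rw [hnorm]; simp)
  · refine h.form_ne_form_self hE hγ hγγ ?_
    rw [hnorm, hs.add_right, hγγ]; push_cast; linear_combination hn / 2

end

theorem exists_sign_choice (F : Type*) [Field F] [CharZero F] :
    ∃ V : Set F, ∀ a : F, a ≠ 0 → (a ∈ V ↔ -a ∉ V) := by
  let _ := IsWellOrder.linearOrder (WellOrderingRel (α := F))
  refine ⟨{a | -a < a}, fun a ha => ?_⟩
  have hne : -a ≠ a := fun h => ha (CharZero.neg_eq_self_iff.mp h)
  simp only [Set.mem_ofPred_eq, neg_neg, not_lt]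
  exact ⟨le_of_lt, fun h => lt_of_le_of_ne h hne⟩

section signedRoots

variable {F : Type*} [Field F] {A : Type*} [AddCommGroup A] {form : A → A → F} {R : Set A}
  {V : Set F}

def signedRoots (form : A → A → F) (R : Set A) (V : Set F) : Set A :=
  {x | x ∈ R ∧ ¬(IsIsotropicPairSum form R x ∧ form x x ∈ V)}

theorem signedRoots_subset : signedRoots form R V ⊆ R := fun _ hx => hx.1

theorem mem_signedRoots_of_not_isIsotropicPairSum {x : A} (hx : x ∈ R)
    (h : ¬IsIsotropicPairSum form R x) : x ∈ signedRoots form R V :=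
  ⟨hx, fun h' => h h'.1⟩

variable [CharZero F]

theorem mem_signedRoots_of_isotropic (hs : IsSymForm form) {x : A} (hx : x ∈ R)
    (hxx : form x x = 0) : x ∈ signedRoots form R V :=
  mem_signedRoots_of_not_isIsotropicPairSum hx fun h => h.form_self_ne_zero hs hxx

theorem neg_mem_signedRoots (hE : IsEARS form R) {x : A} (hx : x ∈ signedRoots form R V) :
    -x ∈ signedRoots form R V := by
  refine ⟨hE.neg_mem x hx.1, fun ⟨h, hV⟩ => hx.2 ⟨?_, ?_⟩⟩
  · simpa using h.neg hE
  · rwa [hE.form_neg_neg] at hV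

theorem closure_signedRoots (hE : IsEARS form R) :
    AddSubgroup.closure (signedRoots form R V) = AddSubgroup.closure R := by
  refine le_antisymm (AddSubgroup.closure_mono signedRoots_subset)
    ((AddSubgroup.closure_le _).2 fun x hx => ?_)
  by_cases hxS : x ∈ signedRoots form R V
  · exact AddSubgroup.subset_closure hxS
  · obtain ⟨δ, δ', hp, rfl⟩ : IsIsotropicPairSum form R x := by
      by_contra h
      exact hxS (mem_signedRoots_of_not_isIsotropicPairSum hx h)
    exact add_mem
      (AddSubgroup.subset_closure (mem_signedRoots_of_isotropic hE.toIsSymForm hp.left_mem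
        hp.left_isotropic))
      (AddSubgroup.subset_closure (mem_signedRoots_of_isotropic hE.toIsSymForm hp.right_mem
        hp.right_isotropic))

theorem nsRoots_signedRoots (hs : IsSymForm form) :
    nsRoots form (signedRoots form R V) = nsRoots form R := by
  ext x
  simp only [nsRoots, Set.mem_union, Set.mem_ofPred_eq]
  exact or_congr_left ⟨fun ⟨hx, hxx, hrad⟩ => ⟨hx.1, hxx, hrad⟩,
    fun ⟨hx, hxx, hrad⟩ => ⟨mem_signedRoots_of_isotropic hs hx hxx, hxx, hrad⟩⟩

theorem sub_zsmul_mem_signedRoots (hE : IsEARS form R) {σ β : A} (hσ : σ ∈ R)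
    (hσσ : form σ σ ≠ 0) (hβ : β ∈ signedRoots form R V) {k : ℤ}
    (hk : 2 * form β σ = k * form σ σ) : β - k • σ ∈ signedRoots form R V := by
  have hs := hE.toIsSymForm
  refine ⟨hE.sub_zsmul_mem hσ hσσ hβ.1 hk (by omega), fun ⟨h, hV⟩ => hβ.2 ?_⟩
  -- reflecting back in `σ` returns `β` with the same norm
  have hk' : 2 * form (β - k • σ) σ = (-k : ℤ) * form σ σ := by
    rw [hs.sub_left, hs.zsmul_left]; push_cast; linear_combination hk
  have hβ' : β - k • σ - (-k) • σ = β := by rw [neg_zsmul]; abel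
  refine ⟨hβ' ▸ h.sub_zsmul hE hσ hσσ hk', ?_⟩
  rwa [← hβ', hs.form_sub_zsmul_sub_zsmul hk' hk']

theorem add_mem_signedRoots_iff_sub_not_mem_of_real (hE : IsEARS form R) {α δ : A}
    (hα : α ∈ R) (hαα : form α α ≠ 0) (hδ : δ ∈ R) (hδδ : form δ δ = 0)
    (hαδ : form α δ ≠ 0) : α + δ ∈ signedRoots form R V ↔ α - δ ∉ signedRoots form R V := by
  have hs := hE.toIsSymForm
  have hadd : α + δ ∈ signedRoots form R V ↔ α + δ ∈ R :=
    ⟨fun h => h.1, fun h => mem_signedRoots_of_not_isIsotropicPairSum h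
      (hE.not_isIsotropicPairSum_add hα hαα hδ hδδ hαδ h)⟩
  have hsub : α - δ ∈ signedRoots form R V ↔ α - δ ∈ R := by
    rw [sub_eq_add_neg]
    exact ⟨fun h => h.1, fun h => mem_signedRoots_of_not_isIsotropicPairSum h
      (hE.not_isIsotropicPairSum_add hα hαα (hE.neg_mem δ hδ) (by rwa [hs.form_neg_neg])
        (by rwa [hs.neg_right, neg_ne_zero]) h)⟩
  rw [hadd, hsub]
  exact hE.add_mem_iff_sub_not_mem_of_isotropic hα hαα hδ hδδ hαδ

theorem add_mem_signedRoots_iff_of_isotropic (hL : IsLFRSS form R) {α δ : A} (hα : α ∈ R)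
    (hαα : form α α = 0) (hδ : δ ∈ R) (hδδ : form δ δ = 0) (hαδ : form α δ ≠ 0) :
    α + δ ∈ signedRoots form R V ↔ α + δ ∈ R ∧ (α - δ ∈ R → 2 * form α δ ∉ V) := by
  have hs := hL.1.toIsSymForm
  have hnorm : form (α + δ) (α + δ) = 2 * form α δ := by
    simp only [hs.add_left, hs.add_right, hαα, hδδ, hs.symm δ α]; ring
  refine ⟨fun h => ⟨h.1, fun hsub hV => h.2 ⟨⟨α, δ, ⟨hα, hαα, hδ, hδδ, hαδ, h.1, hsub⟩, rfl⟩,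
    by rwa [hnorm]⟩⟩, fun ⟨hadd, hV⟩ => ⟨hadd, fun ⟨h, hV'⟩ => hV ?_ (by rwa [← hnorm])⟩⟩
  convert h.add_self_sub_mem hL hα hαα (by rw [hnorm, hs.add_right, hαα]; ring) using 1
  abel

theorem add_mem_signedRoots_iff_sub_not_mem_of_isotropic (hL : IsLFRSS form R)
    (hV : ∀ a : F, a ≠ 0 → (a ∈ V ↔ -a ∉ V)) {α δ : A} (hα : α ∈ R) (hαα : form α α = 0)
    (hδ : δ ∈ R) (hδδ : form δ δ = 0) (hαδ : form α δ ≠ 0) :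
    α + δ ∈ signedRoots form R V ↔ α - δ ∉ signedRoots form R V := by
  have hE := hL.1
  have hs := hE.toIsSymForm
  have hsub := add_mem_signedRoots_iff_of_isotropic (V := V) hL hα hαα (hE.neg_mem δ hδ)
    (by rwa [hs.form_neg_neg]) (by rwa [hs.neg_right, neg_ne_zero])
  rw [← sub_eq_add_neg, sub_neg_eq_add, hs.neg_right, mul_neg] at hsub
  rw [add_mem_signedRoots_iff_of_isotropic hL hα hαα hδ hδδ hαδ, hsub,
    hV _ (mul_ne_zero two_ne_zero hαδ)]
  have := hE.ns_string δ hδ hδδ α hα (by rwa [hs.symm])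
  tauto

theorem add_mem_signedRoots_iff_sub_not_mem (hL : IsLFRSS form R)
    (hV : ∀ a : F, a ≠ 0 → (a ∈ V ↔ -a ∉ V)) {α δ : A} (hα : α ∈ R) (hδ : δ ∈ R)
    (hδδ : form δ δ = 0) (hαδ : form α δ ≠ 0) :
    α + δ ∈ signedRoots form R V ↔ α - δ ∉ signedRoots form R V := by
  by_cases hαα : form α α = 0
  · exact add_mem_signedRoots_iff_sub_not_mem_of_isotropic hL hV hα hαα hδ hδδ hαδ
  · exact add_mem_signedRoots_iff_sub_not_mem_of_real hL.1 hα hαα hδ hδδ hαδ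

end signedRoots

theorem existsUnique_sign_of_add_mem_iff {A : Type*} [AddCommGroup A] {S : Set A} {α δ : A}
    (h : α + δ ∈ S ↔ α - δ ∉ S) :
    ∃! r : ℤ, (r = 1 ∨ r = -1) ∧ α + r • δ ∈ S := by
  by_cases hadd : α + δ ∈ S
  · refine ⟨1, ⟨Or.inl rfl, by simpa using hadd⟩, ?_⟩
    rintro r ⟨rfl | rfl, hr⟩
    · rfl
    · exact absurd (by simpa [← sub_eq_add_neg] using hr) (h.1 hadd)
  · refine ⟨-1, ⟨Or.inr rfl, by simpa [← sub_eq_add_neg] using not_not.1 (mt h.2 hadd)⟩, ?_⟩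
    rintro r ⟨rfl | rfl, hr⟩
    · exact absurd (by simpa using hr) hadd
    · rfl

theorem stmt14 {F : Type*} [Field F] [CharZero F] {A : Type*} [AddCommGroup A]
    (form : A → A → F) (R : Set A) (h : IsLFRSS form R) :
    ∃ S : Set A, IsSubSupersystem form R S ∧
      nsRoots form S = nsRoots form R ∧
      AddSubgroup.closure S = AddSubgroup.closure R ∧
      ∀ α ∈ S, ∀ δ ∈ nsRoots form S, form α δ ≠ 0 →
        ∃! r : ℤ, (r = 1 ∨ r = -1) ∧ α + r • δ ∈ S := by
  obtain ⟨V, hV⟩ := exists_sign_choice F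
  have hE := h.1
  have hs := hE.toIsSymForm
  refine ⟨signedRoots form R V, ⟨signedRoots_subset, ?_, ?_, ?_, ?_⟩,
    nsRoots_signedRoots hs, closure_signedRoots hE, ?_⟩
  · intro a _ ha
    refine h.2 a fun b => ha b ?_
    rw [closure_signedRoots hE, hE.closure_eq_top]
    exact AddSubgroup.mem_top b
  · exact mem_signedRoots_of_isotropic hs hE.zero_mem (hs.zero_left 0)
  · exact fun α hα hαα β hβ k hk =>
      sub_zsmul_mem_signedRoots hE (signedRoots_subset hα) hαα hβ hk
  · intro γ hγ hγγ β hβ hβγ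
    by_cases hadd : β + γ ∈ signedRoots form R V
    · exact Or.inr (by rwa [add_comm])
    · have hsub := (add_mem_signedRoots_iff_sub_not_mem h hV hβ.1 hγ.1 hγγ hβγ).not_left.1 hadd
      exact Or.inl (by simpa using neg_mem_signedRoots hE hsub)
  · rintro α hα δ (⟨hδ, hδδ, -⟩ | rfl) hαδ
    · exact existsUnique_sign_of_add_mem_iff
        (add_mem_signedRoots_iff_sub_not_mem h hV hα.1 hδ.1 hδδ hαδ)
    · exact absurd (hs.zero_right α) hαδ
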